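/- Let W be a symmetric mn×mn real matrix with largest eigenvalue μ_max(W), let α ∈ (0,1), and let ḡ_a > 0 satisfy ḡ_a > α(μ_max(W) − 2). Then (s̄, ā) = (0,0) is the unique equilibrium of system (7): if W f̄(s̄) − s̄ − ā = 0 and ḡ_a f̄(s̄) − α ā = 0, then s̄ = 0 and ā = 0. Equivalently, the only solution of (W − (ḡ_a/α)I) f̄(s̄) = s̄ is s̄ = 0. -/

import Mathlib

open scoped BigOperators
open scoped RealInnerProductSpace

/-- The blockwise softmax `f : ℝ^{mn} → ℝ^{mn}`,
`f(s)_{ij} = exp(s_{ij}) / ∑_{l=1}^m exp(s_{il})`. -/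
noncomputable def softmax (n m : ℕ) (s : Fin n × Fin m → ℝ) : Fin n × Fin m → ℝ :=
  fun p => Real.exp (s p) / ∑ l : Fin m, Real.exp (s (p.1, l))

/-- The centered blockwise softmax `f̄(s) = f(s) − (1/m)𝟙`. -/
noncomputable def fbar (n m : ℕ) (s : Fin n × Fin m → ℝ) : Fin n × Fin m → ℝ :=
  fun p => softmax n m s p - 1 / m


lemma core_exp (x : ℝ) (hx : 0 ≤ x) : 0 ≤ (x - 2) * Real.exp x + x + 2 := by
  set g : ℝ → ℝ := fun y => (y - 2) * Real.exp y + y + 2 with hg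
  have hderiv : ∀ y : ℝ, HasDerivAt g ((y - 1) * Real.exp y + 1) y := by
    intro y
    have h1 : HasDerivAt (fun y : ℝ => (y - 2) * Real.exp y)
        (1 * Real.exp y + (y - 2) * Real.exp y) y :=
      (((hasDerivAt_id y).sub_const 2)).mul (Real.hasDerivAt_exp y)
    have := (h1.add (hasDerivAt_id y)).add_const 2
    exact this.congr_deriv (by ring)
  have hmono : MonotoneOn g (Set.Ici 0) := by
    apply monotoneOn_of_deriv_nonneg (convex_Ici 0)
    · exact (Continuous.continuousOn (by continuity))
    · intro y hy
      exact (hderiv y).differentiableAt.differentiableWithinAt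
    · intro y hy
      rw [(hderiv y).deriv]
      have : (1 - y) * Real.exp y ≤ 1 := by
        have h := Real.add_one_le_exp (-y)
        calc (1 - y) * Real.exp y ≤ Real.exp (-y) * Real.exp y := by
              apply mul_le_mul_of_nonneg_right _ (Real.exp_pos y).le
              linarith
          _ = 1 := by rw [← Real.exp_add]; simp
      nlinarith
  have h0 : g 0 = 0 := by simp [hg]
  have := hmono (Set.self_mem_Ici) (Set.mem_Ici.mpr hx) hx
  simpa [h0] using this


-- log t * (t+1) ≥ 2(t-1) for t ≥ 1
lemma core_log {t : ℝ} (ht : 1 ≤ t) : 2 * (t - 1) ≤ Real.log t * (t + 1) := by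
  have ht0 : 0 < t := lt_of_lt_of_le one_pos ht
  have hlog : 0 ≤ Real.log t := Real.log_nonneg ht
  have h := core_exp (Real.log t) hlog
  rw [Real.exp_log ht0] at h
  nlinarith

-- (a-b)(log a - log b)(a+b) ≥ 2(a-b)^2 for a,b > 0
lemma logmean {a b : ℝ} (ha : 0 < a) (hb : 0 < b) :
    2 * (a - b) ^ 2 ≤ (a - b) * (Real.log a - Real.log b) * (a + b) := by
  rcases le_total b a with h | h
  · have ht : 1 ≤ a / b := (one_le_div hb).mpr h
    have h2 := core_log ht
    rw [Real.log_div ha.ne' hb.ne'] at h2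
    have hb2 : 0 < b ^ 2 := by positivity
    have : 2 * (a/b - 1) * (a/b - 1) ≤ (Real.log a - Real.log b) * (a/b + 1) * (a/b -1) := by
      apply mul_le_mul_of_nonneg_right h2
      linarith [(one_le_div hb).mpr h]
    have hab : a / b - 1 = (a - b)/b := by field_simp
    have hab2 : a / b + 1 = (a + b)/b := by field_simp
    rw [hab, hab2] at this
    have := mul_le_mul_of_nonneg_right this hb2.le
    calc 2 * (a - b)^2 = 2 * ((a-b)/b) * ((a-b)/b) * b^2 := by field_simp
      _ ≤ (Real.log a - Real.log b) * ((a+b)/b) * ((a-b)/b) * b^2 := this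
      _ = (a - b) * (Real.log a - Real.log b) * (a + b) := by field_simp
  · have ht : 1 ≤ b / a := (one_le_div ha).mpr h
    have h2 := core_log ht
    rw [Real.log_div hb.ne' ha.ne'] at h2
    have : 2 * (b/a - 1) * (b/a - 1) ≤ (Real.log b - Real.log a) * (b/a + 1) * (b/a -1) := by
      apply mul_le_mul_of_nonneg_right h2
      linarith [(one_le_div ha).mpr h]
    have hab : b / a - 1 = (b - a)/a := by field_simp
    have hab2 : b / a + 1 = (b + a)/a := by field_simp
    rw [hab, hab2] at this
    have := mul_le_mul_of_nonneg_right this (by positivity : (0:ℝ) ≤ a^2)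
    calc 2 * (a - b)^2 = 2 * ((b-a)/a) * ((b-a)/a) * a^2 := by field_simp; ring
      _ ≤ (Real.log b - Real.log a) * ((b+a)/a) * ((b-a)/a) * a^2 := this
      _ = (a - b) * (Real.log a - Real.log b) * (a + b) := by field_simp; ring
open Finset

lemma zerosum_sq {ι : Type*} [Fintype ι] (v : ι → ℝ) (hsum : ∑ j, v j = 0) :
    2 * ∑ j, (v j) ^ 2 ≤ (∑ j, |v j|) ^ 2 := by
  classical
  set T : Finset ι := Finset.univ.filter (fun j => 0 ≤ v j) with hT
  set P : ℝ := ∑ j ∈ T, v j with hP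
  set N : ℝ := ∑ j ∈ Tᶜ, (-v j) with hN
  have hPN : P - N = 0 := by
    rw [hP, hN, Finset.sum_neg_distrib, sub_neg_eq_add, Finset.sum_add_sum_compl]
    exact hsum
  have habs : ∑ j, |v j| = P + N := by
    rw [← Finset.sum_add_sum_compl T (fun j => |v j|)]
    congr 1
    · apply Finset.sum_congr rfl; intro j hj
      exact abs_of_nonneg (Finset.mem_filter.mp hj).2
    · apply Finset.sum_congr rfl; intro j hj
      have := Finset.mem_compl.mp hj
      simp only [hT, Finset.mem_filter, Finset.mem_univ, true_and, not_le] at this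
      exact abs_of_neg this
  have hsq : ∑ j, (v j) ^ 2 ≤ P ^ 2 + N ^ 2 := by
    rw [← Finset.sum_add_sum_compl T (fun j => (v j) ^ 2)]
    gcongr
    · calc ∑ j ∈ T, (v j)^2 ≤ (∑ j ∈ T, v j)^2 := by
            apply Finset.sum_sq_le_sq_sum_of_nonneg
            intro j hj; exact (Finset.mem_filter.mp hj).2
        _ = P ^ 2 := rfl
    · calc ∑ j ∈ Tᶜ, (v j)^2 = ∑ j ∈ Tᶜ, (-v j)^2 := by simp
        _ ≤ (∑ j ∈ Tᶜ, (-v j))^2 := by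
            apply Finset.sum_sq_le_sq_sum_of_nonneg
            intro j hj
            have := Finset.mem_compl.mp hj
            simp only [hT, Finset.mem_filter, Finset.mem_univ, true_and, not_le] at this
            linarith
        _ = N ^ 2 := rfl
  have hPeqN : P = N := by linarith
  rw [habs]
  nlinarith [hsq]

-- Cauchy-Schwarz: (∑|v|)² ≤ (∑ w) * (∑ v²/w), w > 0
lemma cs_div {ι : Type*} [Fintype ι] (v w : ι → ℝ) (hw : ∀ j, 0 < w j) :
    (∑ j, |v j|) ^ 2 ≤ (∑ j, w j) * ∑ j, (v j) ^ 2 / w j := by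
  have key := Finset.sum_mul_sq_le_sq_mul_sq Finset.univ
    (fun j => Real.sqrt (w j)) (fun j => |v j| / Real.sqrt (w j))
  have h1 : ∀ j : ι, Real.sqrt (w j) * (|v j| / Real.sqrt (w j)) = |v j| := by
    intro j
    field_simp [Real.sqrt_ne_zero'.mpr (hw j)]
  have h2 : ∀ j : ι, Real.sqrt (w j) ^ 2 = w j := fun j => Real.sq_sqrt (hw j).le
  have h3 : ∀ j : ι, (|v j| / Real.sqrt (w j)) ^ 2 = (v j) ^ 2 / w j := by
    intro j
    rw [div_pow, sq_abs, h2]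
  simp only [h1, h2, h3] at key
  exact key


lemma block_ineq (m : ℕ) (hm : 0 < m) (s : Fin m → ℝ) :
    2 * ∑ j, (Real.exp (s j) / (∑ l, Real.exp (s l)) - 1 / m) ^ 2 ≤
      ∑ j, s j * (Real.exp (s j) / (∑ l, Real.exp (s l)) - 1 / m) := by
  set Z : ℝ := ∑ l, Real.exp (s l) with hZdef
  have hZ : 0 < Z := Finset.sum_pos (fun l _ => Real.exp_pos _) ⟨⟨0, hm⟩, Finset.mem_univ _⟩
  set p : Fin m → ℝ := fun j => Real.exp (s j) / Z with hpdef
  set u : ℝ := 1 / m with hudef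
  have hu : 0 < u := by positivity
  have hp : ∀ j, 0 < p j := fun j => div_pos (Real.exp_pos _) hZ
  set v : Fin m → ℝ := fun j => p j - u with hvdef
  have hpsum : ∑ j, p j = 1 := by
    rw [hpdef, ← Finset.sum_div]
    exact div_self hZ.ne'
  have hvsum : ∑ j, v j = 0 := by
    simp only [hvdef, Finset.sum_sub_distrib, hpsum, Finset.sum_const, Finset.card_univ,
      Fintype.card_fin, nsmul_eq_mul, hudef]
    field_simp
    norm_num
  have hs : ∀ j, s j = Real.log (p j) + Real.log Z := by
    intro j
    rw [hpdef, Real.log_div (Real.exp_pos _).ne' hZ.ne', Real.log_exp]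
    ring
  have hrw : ∑ j, s j * v j = ∑ j, (Real.log (p j) - Real.log u) * v j := by
    have e1 : ∑ j, s j * v j = ∑ j, Real.log (p j) * v j + Real.log Z * ∑ j, v j := by
      rw [Finset.mul_sum, ← Finset.sum_add_distrib]
      apply Finset.sum_congr rfl
      intro j _
      rw [hs j]; ring
    have e2 : ∑ j, (Real.log (p j) - Real.log u) * v j
        = ∑ j, Real.log (p j) * v j - Real.log u * ∑ j, v j := by
      rw [Finset.mul_sum, ← Finset.sum_sub_distrib]
      apply Finset.sum_congr rfl
      intro j _
      ring
    rw [e1, e2, hvsum]; ring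
  have hpt : ∀ j, 2 * (v j) ^ 2 / (p j + u) ≤ (Real.log (p j) - Real.log u) * v j := by
    intro j
    rw [div_le_iff₀ (add_pos (hp j) hu)]
    calc 2 * (v j)^2 ≤ (p j - u) * (Real.log (p j) - Real.log u) * (p j + u) :=
          logmean (hp j) hu
      _ = (Real.log (p j) - Real.log u) * v j * (p j + u) := by rw [hvdef]; ring
  have hwsum : ∑ j, (p j + u) = 2 := by
    rw [Finset.sum_add_distrib, hpsum, Finset.sum_const, Finset.card_univ, Fintype.card_fin,
      nsmul_eq_mul, hudef]
    field_simp
    norm_num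
  have hcs := cs_div v (fun j => p j + u) (fun j => add_pos (hp j) hu)
  rw [hwsum] at hcs
  have hzs := zerosum_sq v hvsum
  have hmain : 2 * ∑ j, (v j) ^ 2 ≤ ∑ j, (Real.log (p j) - Real.log u) * v j := by
    calc 2 * ∑ j, (v j)^2 ≤ (∑ j, |v j|)^2 := hzs
      _ ≤ 2 * ∑ j, (v j)^2 / (p j + u) := hcs
      _ = ∑ j, 2 * (v j)^2 / (p j + u) := by
          rw [Finset.mul_sum]; apply Finset.sum_congr rfl; intro j _; ring
      _ ≤ ∑ j, (Real.log (p j) - Real.log u) * v j := Finset.sum_le_sum (fun j _ => hpt j)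
  rw [← hrw] at hmain
  exact hmain


lemma rayleigh {ι : Type*} [Fintype ι] [DecidableEq ι] (W : Matrix ι ι ℝ) (hW : W.IsSymm)
    (μmax : ℝ) (hmaxev : ∀ x : ℝ, Module.End.HasEigenvalue (Matrix.toLin' W) x → x ≤ μmax)
    (y : ι → ℝ) : ∑ i, (W.mulVec y) i * y i ≤ μmax * ∑ i, y i * y i := by
  have hA : W.IsHermitian := by
    rw [Matrix.IsHermitian, Matrix.conjTranspose]
    simpa [Matrix.IsSymm, Matrix.map, Matrix.transpose] using hW
  set b := hA.eigenvectorBasis with hb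
  have hbe : ∀ i, W.mulVec ⇑(b i) = hA.eigenvalues i • ⇑(b i) :=
    fun i => hA.mulVec_eigenvectorBasis i
  have heig : ∀ i, hA.eigenvalues i ≤ μmax := by
    intro i
    apply hmaxev
    apply Module.End.hasEigenvalue_of_hasEigenvector (x := ⇑(b i))
    constructor
    · rw [Module.End.mem_eigenspace_iff, Matrix.toLin'_apply]
      exact hbe i
    · intro hzero
      have h0 : b i = 0 := by
        ext k
        exact congrFun hzero k
      exact hA.eigenvectorBasis.orthonormal.ne_zero i h0
  -- Euclidean space versions
  set Y : EuclideanSpace ℝ ι := WithLp.toLp 2 y with hY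
  set Z : EuclideanSpace ℝ ι := WithLp.toLp 2 (W.mulVec y) with hZ
  have hinner : ∀ x z : EuclideanSpace ℝ ι, ⟪x, z⟫ = ∑ i, x i * z i := by
    intro x z
    simp [PiLp.inner_apply, mul_comm]
  have hbz : ∀ i, ⟪b i, Z⟫ = hA.eigenvalues i * ⟪b i, Y⟫ := by
    intro i
    rw [hinner, hinner]
    have : ∑ k, (b i) k * Z k = dotProduct (⇑(b i)) (W.mulVec y) := rfl
    have hvm : Matrix.vecMul (⇑(b i)) W = W.mulVec ⇑(b i) := by
      rw [← Matrix.mulVec_transpose, hW.eq]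
    rw [this, Matrix.dotProduct_mulVec, hvm, hbe i]
    rw [smul_dotProduct, smul_eq_mul, dotProduct, Finset.mul_sum]
  have hsum1 := hA.eigenvectorBasis.sum_inner_mul_inner Y Z
  have hsum2 := hA.eigenvectorBasis.sum_inner_mul_inner Y Y
  have lhs_eq : ∑ i, (W.mulVec y) i * y i = ⟪Y, Z⟫ := by
    rw [hinner]
    exact Finset.sum_congr rfl (fun i _ => mul_comm _ _)
  have rhs_eq : ∑ i, y i * y i = ⟪Y, Y⟫ := (hinner Y Y).symm
  rw [lhs_eq, rhs_eq, ← hsum1, ← hsum2]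
  have step : ∀ i, ⟪Y, b i⟫ * ⟪b i, Z⟫ ≤ μmax * (⟪Y, b i⟫ * ⟪b i, Y⟫) := by
    intro i
    rw [hbz i]
    have hsq : ⟪Y, b i⟫ * ⟪b i, Y⟫ = (⟪b i, Y⟫) ^ 2 := by
      rw [real_inner_comm Y (b i)]; ring
    rw [hsq]
    calc ⟪Y, b i⟫ * (hA.eigenvalues i * ⟪b i, Y⟫) = hA.eigenvalues i * (⟪b i, Y⟫)^2 := by
          rw [real_inner_comm Y (b i)]; ring
      _ ≤ μmax * (⟪b i, Y⟫)^2 := by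
          apply mul_le_mul_of_nonneg_right (heig i) (sq_nonneg _)
  calc ∑ i, ⟪Y, b i⟫ * ⟪b i, Z⟫ ≤ ∑ i, μmax * (⟪Y, b i⟫ * ⟪b i, Y⟫) :=
        Finset.sum_le_sum (fun i _ => step i)
    _ = μmax * ∑ i, ⟪Y, b i⟫ * ⟪b i, Y⟫ := by rw [Finset.mul_sum]

/-- Proposition 1: if `W` is symmetric with largest eigenvalue `μ_max(W)` and
`ḡ_a > α(μ_max(W) − 2)`, then the origin is the unique equilibrium of system (7). -/
theorem stmt5 (n m : ℕ) (hn : 1 ≤ n) (hm : 2 ≤ m)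
    (W : Matrix (Fin n × Fin m) (Fin n × Fin m) ℝ) (hW : W.IsSymm)
    (μmax : ℝ)
    (hev : Module.End.HasEigenvalue (Matrix.toLin' W) μmax)
    (hmaxev : ∀ x : ℝ, Module.End.HasEigenvalue (Matrix.toLin' W) x → x ≤ μmax)
    (α ga : ℝ) (hα : α ∈ Set.Ioo (0 : ℝ) 1) (hga0 : 0 < ga)
    (hga : α * (μmax - 2) < ga)
    (sbar abar : Fin n × Fin m → ℝ)
    (h1 : W.mulVec (fbar n m sbar) - sbar - abar = 0)
    (h2 : ga • fbar n m sbar - α • abar = 0) :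
    sbar = 0 ∧ abar = 0 := by
  obtain ⟨hα0, hα1⟩ := hα
  set y : Fin n × Fin m → ℝ := fbar n m sbar with hy
  have habar : ∀ p, abar p = (ga / α) * y p := by
    intro p
    have := congrFun h2 p
    simp only [Pi.sub_apply, Pi.smul_apply, smul_eq_mul, Pi.zero_apply] at this
    field_simp
    linarith
  have hsbar : ∀ p, sbar p = (W.mulVec y) p - abar p := by
    intro p
    have := congrFun h1 p
    simp only [Pi.sub_apply, Pi.zero_apply] at this
    linarith
  -- lower bound : 2 * S ≤ ∑ sbar p * y p
  set S : ℝ := ∑ p, (y p) ^ 2 with hS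
  have hlow : 2 * S ≤ ∑ p, sbar p * y p := by
    rw [hS]
    rw [Fintype.sum_prod_type, Fintype.sum_prod_type, Finset.mul_sum]
    apply Finset.sum_le_sum
    intro i _
    have hb := block_ineq m (by omega) (fun j => sbar (i, j))
    have hyij : ∀ j, y (i, j) =
        Real.exp (sbar (i, j)) / (∑ l, Real.exp (sbar (i, l))) - 1 / m := by
      intro j
      simp [hy, fbar, softmax]
    calc 2 * ∑ j, y (i, j) ^ 2
        = 2 * ∑ j, (Real.exp (sbar (i, j)) / (∑ l, Real.exp (sbar (i, l))) - 1 / m) ^ 2 := by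
          simp only [hyij]
      _ ≤ ∑ j, sbar (i, j) * (Real.exp (sbar (i, j)) / (∑ l, Real.exp (sbar (i, l))) - 1 / m) :=
          hb
      _ = ∑ j, sbar (i, j) * y (i, j) := by
          simp only [hyij]
  -- upper bound
  have hup : ∑ p, sbar p * y p ≤ (μmax - ga / α) * S := by
    have e1 : ∑ p, sbar p * y p
        = ∑ p, (W.mulVec y) p * y p - (ga / α) * ∑ p, (y p) ^ 2 := by
      rw [Finset.mul_sum, ← Finset.sum_sub_distrib]
      apply Finset.sum_congr rfl
      intro p _
      rw [hsbar p, habar p]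
      ring
    have e2 : ∑ p, (W.mulVec y) p * y p ≤ μmax * ∑ p, (y p) ^ 2 := by
      have := rayleigh W hW μmax hmaxev y
      calc ∑ p, (W.mulVec y) p * y p ≤ μmax * ∑ p, y p * y p := this
        _ = μmax * ∑ p, (y p) ^ 2 := by
            congr 1
            exact Finset.sum_congr rfl (fun p _ => (sq (y p)).symm)
    rw [e1, hS]
    nlinarith [e2]
  have hSnn : 0 ≤ S := Finset.sum_nonneg (fun p _ => sq_nonneg _)
  have hcoef : μmax - ga / α < 2 := by
    have : μmax - 2 < ga / α := by
      rw [lt_div_iff₀ hα0]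
      nlinarith
    linarith
  have hS0 : S = 0 := by
    by_contra hne
    have hSpos : 0 < S := lt_of_le_of_ne hSnn (Ne.symm hne)
    have : 2 * S < 2 * S := by
      calc 2 * S ≤ ∑ p, sbar p * y p := hlow
        _ ≤ (μmax - ga / α) * S := hup
        _ < 2 * S := by nlinarith
    linarith
  have hyzero : ∀ p, y p = 0 := by
    intro p
    have := (Finset.sum_eq_zero_iff_of_nonneg (fun q _ => sq_nonneg (y q))).mp hS0 p
      (Finset.mem_univ p)
    exact pow_eq_zero_iff (by norm_num) |>.mp this
  have hyfun : y = 0 := funext (fun p => hyzero p)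
  have habar0 : abar = 0 := by
    funext p
    rw [habar p, hyzero p, mul_zero]
    rfl
  have hsbar0 : sbar = 0 := by
    funext p
    rw [hsbar p, hyfun, Matrix.mulVec_zero, habar0]
    simp
  exact ⟨hsbar0, habar0⟩
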